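/- Let G = G₁ +_A G₂ be the gluing of graphs G₁ and G₂ along a single common vertex A. Suppose the hat guessing games ⟨G₁, h₁, g₁⟩ and ⟨G₂, h₂, g₂⟩ are both losing, with g₁(A) = g₂(A) = s and h₁(A) ≥ h₂(A) = s+1. Then the game ⟨G, h, g⟩ is losing, where h agrees with h₁ on V(G₁), with h₂ on V(G₂)\{A}, h(A) = h₁(A), and g agrees with g₁, g₂ on their respective vertex sets. -/

import Mathlib

/-- A winning strategy in the hat guessing game `⟨G, h, g⟩`: each sage `v` deterministically
outputs at most `g v` guesses depending only on the hat colors of its neighbors, and for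
every hat assignment (with `c v < h v`) some sage's guess set contains its own color. -/
def HatWinning {V : Type*} (G : SimpleGraph V) (h g : V → ℕ) : Prop :=
  ∃ σ : V → (V → ℕ) → Finset ℕ,
    (∀ v c c', (∀ u, G.Adj v u → c u = c' u) → σ v c = σ v c') ∧
    (∀ v c, (σ v c).card ≤ g v) ∧
    ∀ c : V → ℕ, (∀ v, c v < h v) → ∃ v, c v ∈ σ v c

/-- The hat guessing game played by the sages occupying the vertices of `S` only
(the game on the induced subgraph `G[S]`). -/
def HatWinningOn {V : Type*} (G : SimpleGraph V) (S : Set V) (h g : V → ℕ) : Prop :=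
  ∃ σ : V → (V → ℕ) → Finset ℕ,
    (∀ v ∈ S, ∀ c c', (∀ u ∈ S, G.Adj v u → c u = c' u) → σ v c = σ v c') ∧
    (∀ v ∈ S, ∀ c, (σ v c).card ≤ g v) ∧
    ∀ c : V → ℕ, (∀ v ∈ S, c v < h v) → ∃ v ∈ S, c v ∈ σ v c

/-!
Let `σ` be a winning strategy on the glued graph. For a coloring `c` of the first side, call a
color `x` of `A` safe if, whatever the hats on the second side are while `A` wears `x`, some sage
of `S₂` guesses correctly. If `c` had `s + 1` safe colors, the sages of `S₂` could play the second
game by reading `A`'s `s + 1` colors as these safe colors, and would win. So `A` can afford to guess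
all (at most `s`) safe colors in the first game, while the other sages of `S₁` play `σ`: if `A`'s
color is not safe, a losing completion on the second side forces a sage of `S₁ \ {A}` to be right.
-/

open Finset

section

variable {V : Type*}

def IsStrategyOn (G : SimpleGraph V) (S : Set V) (g : V → ℕ)
    (σ : V → (V → ℕ) → Finset ℕ) : Prop :=
  (∀ v ∈ S, ∀ c c', (∀ u ∈ S, G.Adj v u → c u = c' u) → σ v c = σ v c') ∧
    ∀ v ∈ S, ∀ c, #(σ v c) ≤ g v

theorem Finset.exists_mapsTo_leftInvOn (B : Finset ℕ) :
    ∃ Ψ φ : ℕ → ℕ, Set.MapsTo Ψ (Set.Iio #B) B ∧ Set.LeftInvOn φ Ψ (Set.Iio #B) := by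
  have hf : (Set.ofPred (· ∈ B)).Finite := B.finite_toSet
  have hcard : #hf.toFinset = #B := by simp
  exact ⟨Nat.nth (· ∈ B), Nat.count (· ∈ B),
    fun i hi => Nat.nth_mem_of_lt_card hf (hcard ▸ hi),
    fun i hi => Nat.count_nth_of_lt_card_finite hf (hcard ▸ hi)⟩

/-- The sages play `σ` after reading `A`'s color `i` as the `i`-th color of `B`. -/
theorem hatWinningOn_of_wins_on_colors_in {G : SimpleGraph V} {S : Set V} {h g : V → ℕ}
    {A : V} (hA : A ∈ S) (B : Finset ℕ) (hB : h A ≤ #B) (σ : V → (V → ℕ) → Finset ℕ)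
    (hσ : IsStrategyOn G S g σ)
    (hwin : ∀ c : V → ℕ, (∀ v ∈ S, v ≠ A → c v < h v) → c A ∈ B → ∃ v ∈ S, c v ∈ σ v c) :
    HatWinningOn G S h g := by
  classical
  obtain ⟨Ψ, φ, hΨ, hφ⟩ := B.exists_mapsTo_leftInvOn
  let recolor (d : V → ℕ) : V → ℕ := Function.update d A (Ψ (d A))
  refine ⟨fun v d => if v = A then (σ A (recolor d)).image φ else σ v (recolor d),
    fun v hv d d' hdd' => ?_, fun v hv d => ?_, fun d hd => ?_⟩
  · have hrecolor : ∀ u ∈ S, G.Adj v u → recolor d u = recolor d' u := by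
      intro u hu hvu
      by_cases huA : u = A
      · subst huA; simp [recolor, hdd' u hu hvu]
      · simp [recolor, huA, hdd' u hu hvu]
    dsimp only
    split_ifs with hvA
    · subst hvA
      rw [hσ.1 v hv _ _ hrecolor]
    · exact hσ.1 v hv _ _ hrecolor
  · dsimp only
    split_ifs with hvA
    · subst hvA
      exact card_image_le.trans (hσ.2 v hv _)
    · exact hσ.2 v hv _
  · have hdA : d A < #B := (hd A hA).trans_le hB
    obtain ⟨v, hv, hvwin⟩ := hwin (recolor d)
      (fun v hv hvA => by simpa [recolor, hvA] using hd v hv)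
      (by simpa [recolor] using hΨ hdA)
    refine ⟨v, hv, ?_⟩
    dsimp only
    split_ifs with hvA
    · subst hvA
      simp only [recolor, Function.update_self] at hvwin
      exact mem_image.2 ⟨_, hvwin, hφ hdA⟩
    · simpa [recolor, hvA] using hvwin

variable {G₁ G₂ : SimpleGraph V} {S₁ S₂ : Set V} {A : V}

theorem adj_right_of_sup_adj (hG₁ : ∀ x y, G₁.Adj x y → x ∈ S₁ ∧ y ∈ S₁)
    (hS : (S₁ ∩ S₂).Subsingleton) {v u : V} (hv : v ∈ S₂) (hu : u ∈ S₂)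
    (hvu : (G₁ ⊔ G₂).Adj v u) : G₂.Adj v u := by
  refine hvu.resolve_left fun h₁ => ?_
  obtain rfl : v = u := hS ⟨(hG₁ v u h₁).1, hv⟩ ⟨(hG₁ v u h₁).2, hu⟩
  exact G₁.irrefl h₁

theorem adj_left_of_sup_adj_of_notMem (hG₂ : ∀ x y, G₂.Adj x y → x ∈ S₂ ∧ y ∈ S₂)
    {v u : V} (hv : v ∉ S₂) (hvu : (G₁ ⊔ G₂).Adj v u) : G₁.Adj v u :=
  hvu.resolve_right fun h₂ => hv (hG₂ v u h₂).1

def safeColors (S₂ : Set V) [DecidablePred (· ∈ S₂)] (A : V) (h₂ : V → ℕ)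
    (σ : V → (V → ℕ) → Finset ℕ) (c : V → ℕ) : Set ℕ :=
  {x | ∀ d : V → ℕ, (∀ v ∈ S₂, v ≠ A → d v < h₂ v) → d A = x →
    ∃ v ∈ S₂, d v ∈ σ v (S₂.piecewise d c)}

variable (hG₁ : ∀ x y, G₁.Adj x y → x ∈ S₁ ∧ y ∈ S₁)
    (hG₂ : ∀ x y, G₂.Adj x y → x ∈ S₂ ∧ y ∈ S₂)
    {σ : V → (V → ℕ) → Finset ℕ}
    (hσ : ∀ v c c', (∀ u, (G₁ ⊔ G₂).Adj v u → c u = c' u) → σ v c = σ v c')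
include hG₁ hG₂ hσ

theorem guess_eq_of_notMem {v : V} (hv : v ∉ S₂) {c c' : V → ℕ}
    (hcc' : ∀ u ∈ S₁, G₁.Adj v u → c u = c' u) : σ v c = σ v c' :=
  hσ v c c' fun u hvu =>
    have h₁ := adj_left_of_sup_adj_of_notMem hG₂ hv hvu
    hcc' u (hG₁ v u h₁).2 h₁

variable [DecidablePred (· ∈ S₂)] (hcap : S₁ ∩ S₂ = {A})
include hcap

theorem guess_piecewise_eq {v : V} (hv : v ∈ S₂) {c c' d d' : V → ℕ}
    (hdd' : ∀ u ∈ S₂, G₂.Adj v u → d u = d' u) (hcc' : ∀ u ∈ S₁, G₁.Adj A u → c u = c' u) :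
    σ v (S₂.piecewise d c) = σ v (S₂.piecewise d' c') := by
  refine hσ v _ _ fun u hvu => ?_
  by_cases hu : u ∈ S₂
  · simp only [Set.piecewise_eq_of_mem _ _ _ hu]
    exact hdd' u hu (adj_right_of_sup_adj hG₁ (hcap ▸ Set.subsingleton_singleton) hv hu hvu)
  · have h₁ : G₁.Adj v u := adj_left_of_sup_adj_of_notMem hG₂ hu hvu.symm |>.symm
    have hvA : v = A := hcap.subset ⟨(hG₁ v u h₁).1, hv⟩
    simp only [Set.piecewise_eq_of_notMem _ _ _ hu]
    exact hcc' u (hG₁ v u h₁).2 (hvA ▸ h₁)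

theorem safeColors_congr {h₂ : V → ℕ} {c c' : V → ℕ}
    (hcc' : ∀ u ∈ S₁, G₁.Adj A u → c u = c' u) :
    safeColors S₂ A h₂ σ c = safeColors S₂ A h₂ σ c' := by
  have hguess : ∀ d, ∀ v ∈ S₂, σ v (S₂.piecewise d c) = σ v (S₂.piecewise d c') :=
    fun d v hv => guess_piecewise_eq hG₁ hG₂ hσ hcap hv (fun _ _ _ => rfl) hcc'
  ext x
  refine forall_congr' fun d => imp_congr_right fun _ => imp_congr_right fun _ =>
    exists_congr fun v => and_congr_right fun hv => ?_
  rw [hguess d v hv]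

theorem card_lt_of_subset_safeColors {h₂ g₂ : V → ℕ} (hcard : ∀ v ∈ S₂, ∀ c, #(σ v c) ≤ g₂ v)
    (hlose₂ : ¬ HatWinningOn G₂ S₂ h₂ g₂) (c : V → ℕ) {B : Finset ℕ}
    (hB : ∀ x ∈ B, x ∈ safeColors S₂ A h₂ σ c) : #B < h₂ A := by
  have hA : A ∈ S₂ := (hcap.symm.subset rfl).2
  by_contra! hle
  refine hlose₂ (hatWinningOn_of_wins_on_colors_in hA B hle (fun v d => σ v (S₂.piecewise d c))
    ⟨fun v hv d d' hdd' => guess_piecewise_eq hG₁ hG₂ hσ hcap hv hdd' fun _ _ _ => rfl,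
      fun v hv d => hcard v hv _⟩ fun d hd hdA => hB _ hdA d hd rfl)

theorem exists_correct_of_notMem_safeColors {h h₁ h₂ : V → ℕ}
    (hcup : S₁ ∪ S₂ = Set.univ) (hwin : ∀ c : V → ℕ, (∀ v, c v < h v) → ∃ v, c v ∈ σ v c)
    (hh₁ : ∀ v ∈ S₁, h₁ v ≤ h v) (hh₂ : ∀ v ∈ S₂, v ≠ A → h₂ v ≤ h v)
    {e : V → ℕ} (he : ∀ v ∈ S₁, e v < h₁ v) (heA : e A ∉ safeColors S₂ A h₂ σ e) :
    ∃ v ∈ S₁, v ≠ A ∧ e v ∈ σ v e := by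
  have hA : A ∈ S₁ ∧ A ∈ S₂ := hcap.symm.subset rfl
  simp only [safeColors, Set.mem_ofPred_eq, not_forall, not_exists, not_and] at heA
  obtain ⟨d, hd, hdA, hlose⟩ := heA
  have hk : ∀ u ∈ S₁, S₂.piecewise d e u = e u := by
    intro u hu
    by_cases hu₂ : u ∈ S₂
    · obtain rfl : u = A := hcap.subset ⟨hu, hu₂⟩
      simp [hA.2, hdA]
    · exact Set.piecewise_eq_of_notMem _ _ _ hu₂
  obtain ⟨v, hv⟩ := hwin (S₂.piecewise d e) fun v => by
    by_cases hv₂ : v ∈ S₂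
    · rw [Set.piecewise_eq_of_mem _ _ _ hv₂]
      by_cases hvA : v = A
      · subst hvA; exact hdA ▸ (he v hA.1).trans_le (hh₁ v hA.1)
      · exact (hd v hv₂ hvA).trans_le (hh₂ v hv₂ hvA)
    · have hv₁ : v ∈ S₁ := by simpa [hv₂] using hcup.symm.subset (Set.mem_univ v)
      exact hk v hv₁ ▸ (he v hv₁).trans_le (hh₁ v hv₁)
  have hv₂ : v ∉ S₂ := fun hv₂ => hlose v hv₂ (by rwa [Set.piecewise_eq_of_mem _ _ _ hv₂] at hv)
  have hv₁ : v ∈ S₁ := by simpa [hv₂] using hcup.symm.subset (Set.mem_univ v)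
  refine ⟨v, hv₁, fun hvA => hv₂ (hvA ▸ hA.2), ?_⟩
  rwa [hk v hv₁, guess_eq_of_notMem hG₁ hG₂ hσ hv₂ fun u hu _ => hk u hu] at hv

theorem hatWinningOn_left_of_card_safeColors_le {h h₁ h₂ g₁ : V → ℕ} (hcup : S₁ ∪ S₂ = Set.univ)
    (hcard : ∀ v ∈ S₁, v ≠ A → ∀ c, #(σ v c) ≤ g₁ v)
    (hwin : ∀ c : V → ℕ, (∀ v, c v < h v) → ∃ v, c v ∈ σ v c)
    (hh₁ : ∀ v ∈ S₁, h₁ v ≤ h v) (hh₂ : ∀ v ∈ S₂, v ≠ A → h₂ v ≤ h v)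
    (hsafe : ∀ c (B : Finset ℕ), (∀ x ∈ B, x ∈ safeColors S₂ A h₂ σ c) → #B ≤ g₁ A) :
    HatWinningOn G₁ S₁ h₁ g₁ := by
  classical
  refine ⟨fun v e => if v = A then (range (h₁ A)).filter (· ∈ safeColors S₂ A h₂ σ e) else σ v e,
    fun v hv e e' hee' => ?_, fun v hv e => ?_, fun e he => ?_⟩
  · dsimp only
    split_ifs with hvA
    · subst hvA
      rw [safeColors_congr hG₁ hG₂ hσ hcap fun u hu hvu => hee' u hu hvu]
    · have hv₂ : v ∉ S₂ := fun hv₂ => hvA (hcap.subset ⟨hv, hv₂⟩)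
      exact guess_eq_of_notMem hG₁ hG₂ hσ hv₂ hee'
  · dsimp only
    split_ifs with hvA
    · subst hvA
      exact hsafe e _ fun x hx => (mem_filter.1 hx).2
    · exact hcard v hv hvA e
  · have hA : A ∈ S₁ := (hcap.symm.subset rfl).1
    by_cases heA : e A ∈ safeColors S₂ A h₂ σ e
    · exact ⟨A, hA, by simpa [he A hA] using heA⟩
    · obtain ⟨v, hv, hvA, hve⟩ :=
        exists_correct_of_notMem_safeColors hG₁ hG₂ hσ hcap hcup hwin hh₁ hh₂ he heA
      exact ⟨v, hv, by simpa [hvA] using hve⟩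

end

theorem glue_losing_games {V : Type*} (G₁ G₂ : SimpleGraph V) (S₁ S₂ : Set V) (A : V) (s : ℕ)
    (hG₁ : ∀ x y, G₁.Adj x y → x ∈ S₁ ∧ y ∈ S₁)
    (hG₂ : ∀ x y, G₂.Adj x y → x ∈ S₂ ∧ y ∈ S₂)
    (hcap : S₁ ∩ S₂ = {A}) (hcup : S₁ ∪ S₂ = Set.univ)
    (h₁ g₁ h₂ g₂ h g : V → ℕ)
    (hg₁A : g₁ A = s) (hg₂A : g₂ A = s) (hh₂A : h₂ A = s + 1)
    (hlose₁ : ¬ HatWinningOn G₁ S₁ h₁ g₁) (hlose₂ : ¬ HatWinningOn G₂ S₂ h₂ g₂)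
    (hagree₁ : ∀ x ∈ S₁, h x = h₁ x ∧ g x = g₁ x)
    (hagree₂ : ∀ x ∈ S₂, x ≠ A → h x = h₂ x ∧ g x = g₂ x) :
    ¬ HatWinning (G₁ ⊔ G₂) h g := by
  classical
  rintro ⟨σ, hσ, hcard, hwin⟩
  have hgA : g A = s := by rw [(hagree₁ A (hcap.symm.subset rfl).1).2, hg₁A]
  have hcard₂ : ∀ v ∈ S₂, ∀ c, #(σ v c) ≤ g₂ v := fun v hv c => by
    by_cases hvA : v = A
    · subst hvA; exact (hcard v c).trans (hgA.trans hg₂A.symm).le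
    · exact (hcard v c).trans (hagree₂ v hv hvA).2.le
  refine hlose₁ (hatWinningOn_left_of_card_safeColors_le hG₁ hG₂ hσ hcap (h₂ := h₂) hcup
    (fun v hv _ c => (hcard v c).trans (hagree₁ v hv).2.le) hwin
    (fun v hv => (hagree₁ v hv).1.ge) (fun v hv hvA => (hagree₂ v hv hvA).1.ge) fun c B hB => ?_)
  have := card_lt_of_subset_safeColors hG₁ hG₂ hσ hcap hcard₂ hlose₂ c hB
  omega
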